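/- Let X ⊂ ℝ^d be a convex compact set and let μ be the measure with density f with respect to Lebesgue measure, where f is continuous on X, bounded below on X by a positive constant, and zero outside X. Let x_1, …, x_N ∈ ℝ^d (N ≥ 1) be pairwise distinct and let ν_1, …, ν_N be strictly positive reals with Σ_i ν_i = μ(X). If ψ, ψ' ∈ ℝ^N both satisfy μ(Lag_i^ψ) = ν_i and μ(Lag_i^{ψ'}) = ν_i for all i, then ψ and ψ' differ by a constant: there is c ∈ ℝ with ψ'_i = ψ_i + c for all i; in particular the two Laguerre diagrams coincide, Lag_i^{ψ'} = Lag_i^ψ for all i. -/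

import Mathlib

/-!
Let `S` be the set of indices where `ψ' - ψ` is maximal and `A` the union of their `ψ`-cells.
Passing from `ψ` to `ψ'` only enlarges the cells of `S`; as the masses agree, the `ψ'`-cells of
`S` exceed `A` by a `μ`-null set. All other indices have strictly larger `ψ'`-cost near `A`, so `A`
lies in the interior of those `ψ'`-cells. Since `μ` charges every nonempty open subset of
`interior X`, this makes `A` relatively clopen in the connected set `interior X`, so it contains
it. A cell outside `S` then meets `A` only in bisector hyperplanes and carries no mass, which
contradicts `ν > 0`; hence `S` contains every index.
-/

open MeasureTheory

/-- The Laguerre cell of index `i` for sites `x` and weights `ψ`. -/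
def Lag {d N : ℕ} (x : Fin N → EuclideanSpace ℝ (Fin d)) (ψ : Fin N → ℝ) (i : Fin N) :
    Set (EuclideanSpace ℝ (Fin d)) :=
  {p | ∀ j, j ≠ i → ‖p - x i‖ ^ 2 - ψ i ≤ ‖p - x j‖ ^ 2 - ψ j}

open Set Filter Topology
open scoped ENNReal

namespace MeasureTheory.Measure

variable {E : Type*} [NormedAddCommGroup E] [MeasurableSpace E] [BorelSpace E]

theorem addHaar_preimage_singleton_eq_zero [NormedSpace ℝ E] [FiniteDimensional ℝ E]
    (μ : Measure E) [μ.IsAddHaarMeasure] {L : E →ₗ[ℝ] ℝ} (hL : L ≠ 0) (c : ℝ) :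
    μ (L ⁻¹' {c}) = 0 := by
  rcases (L ⁻¹' {c}).eq_empty_or_nonempty with h | ⟨p₀, hp₀ : L p₀ = c⟩
  · rw [h, measure_empty]
  have h_translate : L ⁻¹' {c} = (fun p => p + -p₀) ⁻¹' (LinearMap.ker L) := by
    ext p
    simp [hp₀, add_neg_eq_zero]
  rw [h_translate, measure_preimage_add_right]
  exact addHaar_submodule μ _ (mt LinearMap.ker_eq_top.mp hL)

theorem addHaar_setOf_norm_sub_sq_sub_eq [InnerProductSpace ℝ E] [FiniteDimensional ℝ E]
    (μ : Measure E) [μ.IsAddHaarMeasure] {a b : E} (hab : a ≠ b) (α β : ℝ) :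
    μ {p | ‖p - a‖ ^ 2 - α = ‖p - b‖ ^ 2 - β} = 0 := by
  have hL : innerₛₗ ℝ (b - a) ≠ 0 := fun h => by
    have := LinearMap.congr_fun h (b - a)
    rw [innerₛₗ_apply_apply, LinearMap.zero_apply, inner_self_eq_zero, sub_eq_zero] at this
    exact hab this.symm
  refine measure_mono_null (fun p hp => ?_)
    (addHaar_preimage_singleton_eq_zero μ hL ((α - β + ‖b‖ ^ 2 - ‖a‖ ^ 2) / 2))
  rw [mem_ofPred_eq, norm_sub_sq_real, norm_sub_sq_real] at hp
  rw [mem_preimage, innerₛₗ_apply_apply, mem_singleton_iff, inner_sub_left, real_inner_comm p,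
    real_inner_comm p]
  linarith

end MeasureTheory.Measure

namespace MeasureTheory

theorem withDensity_ne_zero_of_isOpen {α : Type*} [TopologicalSpace α] [MeasurableSpace α]
    [OpensMeasurableSpace α] (μ : Measure α) [μ.IsOpenPosMeasure] {g : α → ℝ≥0∞} {a : ℝ≥0∞}
    (ha : a ≠ 0) {O : Set α} (hO : IsOpen O) (hne : O.Nonempty) (hg : ∀ p ∈ O, a ≤ g p) :
    μ.withDensity g O ≠ 0 := by
  rw [withDensity_apply _ hO.measurableSet]
  refine (lt_of_lt_of_le ?_ (setLIntegral_mono' hO.measurableSet hg)).ne'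
  rw [setLIntegral_const]
  exact ENNReal.mul_pos ha (hO.measure_pos μ hne).ne'

theorem withDensity_compl_interior_eq_zero {E : Type*} [NormedAddCommGroup E] [NormedSpace ℝ E]
    [MeasurableSpace E] [BorelSpace E] [FiniteDimensional ℝ E] (μ : Measure E)
    [μ.IsAddHaarMeasure] {X : Set E} (hX : Convex ℝ X) {g : E → ℝ≥0∞}
    (hg : ∀ p ∉ X, g p = 0) : μ.withDensity g (interior X)ᶜ = 0 := by
  have h_open : IsOpen (closure X)ᶜ := isClosed_closure.isOpen_compl
  have h_outside : μ.withDensity g (closure X)ᶜ = 0 := by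
    rw [withDensity_apply _ h_open.measurableSet]
    exact setLIntegral_eq_zero h_open.measurableSet
      fun p hp => hg p fun hpX => hp (subset_closure hpX)
  have h_frontier : μ.withDensity g (frontier X) = 0 :=
    withDensity_absolutelyContinuous μ g (hX.addHaar_frontier μ)
  refine measure_mono_null (fun p hp => ?_) (measure_union_null h_outside h_frontier)
  by_cases h : p ∈ closure X
  exacts [Or.inr ⟨h, hp⟩, Or.inl h]

end MeasureTheory

section Laguerre

variable {d N : ℕ} (x : Fin N → EuclideanSpace ℝ (Fin d)) (ψ : Fin N → ℝ)

theorem isClosed_Lag (i : Fin N) : IsClosed (Lag x ψ i) := by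
  simp only [Lag, ofPred_forall]
  exact isClosed_iInter fun j => isClosed_iInter fun _ => isClosed_le (by fun_prop) (by fun_prop)

theorem exists_mem_Lag [Nonempty (Fin N)] (p : EuclideanSpace ℝ (Fin d)) :
    ∃ i, p ∈ Lag x ψ i := by
  obtain ⟨i, hi⟩ := Finite.exists_min fun j => ‖p - x j‖ ^ 2 - ψ j
  exact ⟨i, fun j _ => hi j⟩

theorem Lag_add_const (c : ℝ) (i : Fin N) : Lag x (fun j => ψ j + c) i = Lag x ψ i := by
  ext p
  refine forall₂_congr fun j _ => ?_
  constructor <;> intro h <;> linarith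

theorem volume_Lag_inter_Lag {i j : Fin N} (hij : x i ≠ x j) :
    volume (Lag x ψ i ∩ Lag x ψ j) = 0 :=
  measure_mono_null
    (fun _ hp => le_antisymm (hp.1 j (ne_of_apply_ne x hij).symm) (hp.2 i (ne_of_apply_ne x hij)))
    (Measure.addHaar_setOf_norm_sub_sq_sub_eq volume hij (ψ i) (ψ j))

variable {x ψ} {ψ' : Fin N → ℝ}

theorem Lag_subset_Lag_of_sub_le {i : Fin N} (h : ∀ j, ψ' j - ψ j ≤ ψ' i - ψ i) :
    Lag x ψ i ⊆ Lag x ψ' i :=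
  fun _ hp j hj => by linarith [hp j hj, h j]

theorem biUnion_Lag_subset_interior_biUnion_Lag {c : ℝ} (hc : ∀ j, ψ' j - ψ j ≤ c) :
    ⋃ i ∈ {i | ψ' i - ψ i = c}, Lag x ψ i ⊆
      interior (⋃ i ∈ {i | ψ' i - ψ i = c}, Lag x ψ' i) := by
  intro p hp
  obtain ⟨i, hi : ψ' i - ψ i = c, hpi⟩ := mem_iUnion₂.mp hp
  have : Nonempty (Fin N) := ⟨i⟩
  have h_near : ∀ᶠ q in 𝓝 p, ∀ k, ψ' k - ψ k ≠ c →
      ‖q - x i‖ ^ 2 - ψ' i < ‖q - x k‖ ^ 2 - ψ' k := by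
    refine eventually_all.mpr fun k => ?_
    by_cases hk : ψ' k - ψ k = c
    · exact .of_forall fun _ h => absurd hk h
    have hki : k ≠ i := by rintro rfl; exact hk hi
    refine (ContinuousAt.eventually_lt (by fun_prop) (by fun_prop) ?_).mono fun _ h _ => h
    linarith [hpi k hki, lt_of_le_of_ne (hc k) hk]
  refine mem_interior_iff_mem_nhds.mpr (h_near.mono fun q hq => ?_)
  obtain ⟨m, hm⟩ := exists_mem_Lag x ψ' q
  refine mem_iUnion₂.mpr ⟨m, ?_, hm⟩
  by_contra hmc
  have hmi : m ≠ i := by rintro rfl; exact hmc hi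
  exact (hm i hmi.symm).not_gt (hq m hmc)

variable {μ : Measure (EuclideanSpace ℝ (Fin d))} {s : Set (EuclideanSpace ℝ (Fin d))}

theorem exists_add_const_of_measure_Lag_eq [Nonempty (Fin N)] (hx : Function.Injective x)
    (hμ : μ ≪ volume) (hs : IsPreconnected s) (hs_open : IsOpen s) (hμs : μ sᶜ = 0)
    (hpos : ∀ O, IsOpen O → O ⊆ s → O.Nonempty → μ O ≠ 0)
    (hψ_ne : ∀ i, μ (Lag x ψ i) ≠ 0) (hψ_fin : ∀ i, μ (Lag x ψ i) ≠ ∞)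
    (heq : ∀ i, μ (Lag x ψ' i) = μ (Lag x ψ i)) :
    ∃ c, ∀ i, ψ' i = ψ i + c := by
  obtain ⟨i₀, hi₀⟩ := Finite.exists_max fun i => ψ' i - ψ i
  set c := ψ' i₀ - ψ i₀
  refine ⟨c, fun j => ?_⟩
  by_contra hj
  replace hj : ψ' j - ψ j ≠ c := fun h => hj (by linarith)
  set S := {i | ψ' i - ψ i = c}
  set A := ⋃ i ∈ S, Lag x ψ i
  set U := interior (⋃ i ∈ S, Lag x ψ' i)
  have hA : IsClosed A := S.toFinite.isClosed_biUnion fun i _ => isClosed_Lag x ψ i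
  have hAU : A ⊆ U := biUnion_Lag_subset_interior_biUnion_Lag hi₀
  have hU_diff : μ (U \ A) = 0 := by
    refine measure_mono_null (t := ⋃ i ∈ S, Lag x ψ' i \ Lag x ψ i) (fun p ⟨hpU, hpA⟩ => ?_)
      ((measure_biUnion_null_iff S.to_countable).mpr fun i (hi : _ = c) => ?_)
    · obtain ⟨i, hi, hpi⟩ := mem_iUnion₂.mp (interior_subset hpU)
      exact mem_iUnion₂.mpr ⟨i, hi, hpi, fun h => hpA (mem_iUnion₂.mpr ⟨i, hi, h⟩)⟩
    · rw [measure_sdiff (Lag_subset_Lag_of_sub_le (hi ▸ hi₀))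
        (isClosed_Lag x ψ i).measurableSet.nullMeasurableSet (hψ_fin i), heq, tsub_self]
  have hsU : s ∩ U ⊆ A := by
    intro p hp
    by_contra hpA
    exact hpos ((s ∩ U) \ A) ((hs_open.inter isOpen_interior).sdiff hA) (fun _ hq => hq.1.1)
      ⟨p, hp, hpA⟩ (measure_mono_null (sdiff_subset_sdiff_left inter_subset_right) hU_diff)
  have hsA_ne : (s ∩ (s ∩ U)).Nonempty := by
    obtain ⟨p, hp, hps⟩ := nonempty_of_measure_ne_zero
      ((measure_inter_conull hμs).trans_ne (hψ_ne i₀))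
    exact ⟨p, hps, hps, hAU (mem_iUnion₂.mpr ⟨i₀, rfl, hp⟩)⟩
  have hsA : s ⊆ A := fun p hp => hsU <| hs.subset_of_closure_inter_subset
    (hs_open.inter isOpen_interior) hsA_ne
    (fun q ⟨hq, hqs⟩ => ⟨hqs, hAU (closure_minimal hsU hA hq)⟩) hp
  refine hψ_ne j ?_
  rw [← measure_inter_conull hμs]
  refine measure_mono_null (t := ⋃ i ∈ S, Lag x ψ i ∩ Lag x ψ j) (fun p ⟨hpj, hps⟩ => ?_)
    ((measure_biUnion_null_iff S.to_countable).mpr fun i (hi : _ = c) =>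
      hμ (volume_Lag_inter_Lag x ψ (hx.ne fun h => hj (h ▸ hi))))
  obtain ⟨i, hi, hpi⟩ := mem_iUnion₂.mp (hsA hps)
  exact mem_iUnion₂.mpr ⟨i, hi, hpi, hpj⟩

end Laguerre

theorem laguerre_weights_unique_up_to_constant_general {d N : ℕ} (hN : 1 ≤ N)
    (X : Set (EuclideanSpace ℝ (Fin d))) (hXconv : Convex ℝ X)
    (f : EuclideanSpace ℝ (Fin d) → ℝ)
    (c₀ : ℝ) (hc₀ : 0 < c₀) (hfc : ∀ p ∈ X, c₀ ≤ f p) (hf0 : ∀ p ∉ X, f p = 0)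
    (μ : Measure (EuclideanSpace ℝ (Fin d)))
    (hμ : μ = volume.withDensity fun p => ENNReal.ofReal (f p))
    (x : Fin N → EuclideanSpace ℝ (Fin d)) (hx : Function.Injective x)
    (ν : Fin N → ℝ) (hν : ∀ i, 0 < ν i)
    (ψ ψ' : Fin N → ℝ)
    (hψ : ∀ i : Fin N, (μ (Lag x ψ i)).toReal = ν i)
    (hψ' : ∀ i : Fin N, (μ (Lag x ψ' i)).toReal = ν i) :
    (∃ c : ℝ, ∀ i : Fin N, ψ' i = ψ i + c) ∧
    (∀ i : Fin N, Lag x ψ' i = Lag x ψ i) := by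
  have : Nonempty (Fin N) := ⟨⟨0, hN⟩⟩
  have h_mass {φ : Fin N → ℝ} (hφ : ∀ i, (μ (Lag x φ i)).toReal = ν i) (i : Fin N) :
      0 < μ (Lag x φ i) ∧ μ (Lag x φ i) < ∞ :=
    ENNReal.toReal_pos_iff.mp ((hφ i).symm ▸ hν i)
  have h_interior : μ (interior X)ᶜ = 0 :=
    hμ ▸ withDensity_compl_interior_eq_zero volume hXconv fun p hp => by simp [hf0 p hp]
  have h_open_pos : ∀ O, IsOpen O → O ⊆ interior X → O.Nonempty → μ O ≠ 0 :=
    fun O hO hOX hne => hμ ▸ withDensity_ne_zero_of_isOpen volume (by simpa using hc₀) hO hne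
      fun p hp => ENNReal.ofReal_le_ofReal (hfc p (interior_subset (hOX hp)))
  have h_eq (i : Fin N) : μ (Lag x ψ' i) = μ (Lag x ψ i) :=
    (ENNReal.toReal_eq_toReal_iff' (h_mass hψ' i).2.ne (h_mass hψ i).2.ne).mp
      ((hψ' i).trans (hψ i).symm)
  obtain ⟨c, hc⟩ := exists_add_const_of_measure_Lag_eq hx
    (hμ ▸ withDensity_absolutelyContinuous _ _) hXconv.interior.isPreconnected isOpen_interior
    h_interior h_open_pos (fun i => (h_mass hψ i).1.ne') (fun i => (h_mass hψ i).2.ne) h_eq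
  refine ⟨⟨c, hc⟩, fun i => ?_⟩
  rw [show ψ' = fun j => ψ j + c from funext hc, Lag_add_const]

/-- for a density bounded below on a convex compact set, two weight
vectors whose Laguerre cells carry the same prescribed positive masses differ by
an additive constant, and their Laguerre diagrams coincide. -/
theorem laguerre_weights_unique_up_to_constant {d N : ℕ} (hN : 1 ≤ N)
    (X : Set (EuclideanSpace ℝ (Fin d))) (hXconv : Convex ℝ X) (hXcomp : IsCompact X)
    (f : EuclideanSpace ℝ (Fin d) → ℝ) (hfcont : ContinuousOn f X)
    (c₀ : ℝ) (hc₀ : 0 < c₀) (hfc : ∀ p ∈ X, c₀ ≤ f p) (hf0 : ∀ p ∉ X, f p = 0)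
    (μ : Measure (EuclideanSpace ℝ (Fin d)))
    (hμ : μ = volume.withDensity fun p => ENNReal.ofReal (f p))
    (x : Fin N → EuclideanSpace ℝ (Fin d)) (hx : Function.Injective x)
    (ν : Fin N → ℝ) (hν : ∀ i, 0 < ν i) (hbal : ∑ i : Fin N, ν i = (μ X).toReal)
    (ψ ψ' : Fin N → ℝ)
    (hψ : ∀ i : Fin N, (μ (Lag x ψ i)).toReal = ν i)
    (hψ' : ∀ i : Fin N, (μ (Lag x ψ' i)).toReal = ν i) :
    (∃ c : ℝ, ∀ i : Fin N, ψ' i = ψ i + c) ∧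
    (∀ i : Fin N, Lag x ψ' i = Lag x ψ i) :=
  laguerre_weights_unique_up_to_constant_general hN X hXconv f c₀ hc₀ hfc hf0 μ hμ x hx ν hν ψ ψ' hψ
    hψ'
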